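/- arXiv:1402.4082 — 2 statements merged into one kernel-verified Lean document; each statement's English description precedes it below -/
import Mathlib

section
/- Let F be an algebraically closed field of characteristic different from 2 and let M ∈ F[T] be a monic squarefree polynomial of degree 2h with M(0) ≠ 0. Write M(T) = ∏_{j=1}^{2h}(T − τ_j) and suppose the polynomial M^{(2)}(T) := ∏_{j=1}^{2h}(T − τ_j²) has exactly h distinct roots. Then M(T) = M(−T). -/
open Polynomial

/-- Let `F` be an algebraically closed field of characteristic ≠ 2 and let `M` be a monic
squarefree polynomial of degree `2h` with `M(0) ≠ 0`, written `M(T) = ∏_{j=1}^{2h} (T - τ_j)`.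
If `M^(2)(T) = ∏_{j=1}^{2h} (T - τ_j²)` has exactly `h` distinct roots, then `M(T) = M(-T)`. -/
theorem stmt_9 (F : Type*) [Field F] [IsAlgClosed F] [DecidableEq F] (hchar : (2 : F) ≠ 0)
    (h : ℕ) (M : Polynomial F) (hM : M.Monic) (hsf : Squarefree M)
    (hdeg : M.natDegree = 2 * h) (h0 : M.eval 0 ≠ 0)
    (τ : Fin (2 * h) → F) (hsplit : M = ∏ j, (X - C (τ j)))
    (hroots : (∏ j, (X - C (τ j ^ 2)) : Polynomial F).roots.toFinset.card = h) :
    M.comp (-X) = M := by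
  classical
  -- τ is injective since M is squarefree
  have hτinj : Function.Injective τ := by
    intro i j hij
    by_contra hne
    have hsub : ({i, j} : Finset (Fin (2 * h))) ⊆ Finset.univ := Finset.subset_univ _
    have hdvd := Finset.prod_dvd_prod_of_subset ({i, j} : Finset (Fin (2 * h))) Finset.univ
      (fun k => (X : Polynomial F) - C (τ k)) hsub
    rw [Finset.prod_pair hne, ← hij] at hdvd
    rw [← hsplit] at hdvd
    exact Polynomial.not_isUnit_X_sub_C _ (hsf _ hdvd)
  set S : Finset F := Finset.univ.image τ with hS
  have hScard : S.card = 2 * h := by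
    rw [hS, Finset.card_image_of_injective _ hτinj, Finset.card_univ, Fintype.card_fin]
  set T : Finset F := S.image (fun x => x ^ 2) with hT
  -- T is the set of distinct roots of M^(2)
  have hprodne : (∏ j, (X - C (τ j ^ 2)) : Polynomial F) ≠ 0 :=
    Finset.prod_ne_zero_iff.mpr fun j _ => X_sub_C_ne_zero _
  have hrootsEq : (∏ j, (X - C (τ j ^ 2)) : Polynomial F).roots
      = Multiset.map (fun j => τ j ^ 2) Finset.univ.val := by
    rw [Polynomial.roots_prod _ _ hprodne]
    simp only [roots_X_sub_C]
    exact Multiset.bind_singleton _ _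
  have hTcard : T.card = h := by
    have heq : (∏ j, (X - C (τ j ^ 2)) : Polynomial F).roots.toFinset = T := by
      rw [hrootsEq, Multiset.toFinset_map, Finset.val_toFinset, hT, hS, Finset.image_image]
      rfl
    rw [← heq, hroots]
  -- key: S is closed under negation
  have hneg : ∀ x ∈ S, -x ∈ S := by
    by_contra hcon
    push_neg at hcon
    obtain ⟨x, hxS, hnx⟩ := hcon
    have hsum : S.card = ∑ t ∈ T, (S.filter fun a => a ^ 2 = t).card :=
      Finset.card_eq_sum_card_fiberwise (fun a ha => Finset.mem_image_of_mem _ ha)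
    have hle : ∀ t ∈ T, (S.filter fun a => a ^ 2 = t).card ≤ 2 := by
      intro t ht
      obtain ⟨y, hyS, rfl⟩ := Finset.mem_image.mp ht
      have hsub : (S.filter fun a => a ^ 2 = y ^ 2) ⊆ {y, -y} := by
        intro a ha
        have h2 := (Finset.mem_filter.mp ha).2
        have hz : (a - y) * (a + y) = 0 := by linear_combination h2
        rcases mul_eq_zero.mp hz with hz | hz
        · simp [sub_eq_zero.mp hz]
        · simp [eq_neg_of_add_eq_zero_left hz]
      exact (Finset.card_le_card hsub).trans
        ((Finset.card_insert_le _ _).trans (by simp))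
    have hfx : (S.filter fun a => a ^ 2 = x ^ 2) = {x} := by
      apply Finset.Subset.antisymm
      · intro a ha
        have h2 := (Finset.mem_filter.mp ha).2
        have haS := (Finset.mem_filter.mp ha).1
        have hz : (a - x) * (a + x) = 0 := by linear_combination h2
        rcases mul_eq_zero.mp hz with hz | hz
        · simp [sub_eq_zero.mp hz]
        · exact absurd (eq_neg_of_add_eq_zero_left hz ▸ haS) hnx
      · intro a ha
        rw [Finset.mem_singleton] at ha
        subst ha
        exact Finset.mem_filter.mpr ⟨hxS, rfl⟩
    have hlt : (S.filter fun a => a ^ 2 = x ^ 2).card < 2 := by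
      rw [hfx]; simp
    have hstrict : ∑ t ∈ T, (S.filter fun a => a ^ 2 = t).card < ∑ t ∈ T, 2 :=
      Finset.sum_lt_sum hle ⟨x ^ 2, Finset.mem_image_of_mem _ hxS, hlt⟩
    rw [← hsum, hScard, Finset.sum_const, hTcard, smul_eq_mul] at hstrict
    omega
  -- conclude
  have e1 : (∏ j, (X - C (τ j)) : Polynomial F) = ∏ x ∈ S, (X - C x) :=
    (Finset.prod_image (f := fun x => (X : Polynomial F) - C x) (g := τ)
      (fun a _ b _ hab => hτinj hab)).symm
  have e2 : (∏ j, (X - C (-τ j)) : Polynomial F) = ∏ x ∈ S, (X - C (-x)) :=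
    (Finset.prod_image (f := fun x => (X : Polynomial F) - C (-x)) (g := τ)
      (fun a _ b _ hab => hτinj hab)).symm
  have e3 : (∏ x ∈ S, ((X : Polynomial F) - C (-x))) = ∏ x ∈ S, (X - C x) := by
    apply Finset.prod_nbij' (i := fun x => -x) (j := fun x => -x)
    · intro a ha; exact hneg a ha
    · intro a ha; exact hneg a ha
    · intro a _; simp
    · intro a _; simp
    · intro a _; simp
  have hcomp : M.comp (-X) = ∏ j, (-((X : Polynomial F) - C (-τ j))) := by
    rw [hsplit, Polynomial.prod_comp]
    congr 1
    ext j : 1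
    simp only [sub_comp, X_comp, C_comp, map_neg]
    ring
  have h4 : (∏ j, (-((X : Polynomial F) - C (-τ j))))
      = ∏ j, ((X : Polynomial F) - C (-τ j)) := by
    rw [Finset.prod_congr rfl (fun j _ => (neg_one_mul ((X : Polynomial F) - C (-τ j))).symm),
      Finset.prod_mul_distrib, Finset.prod_const, Finset.card_univ, Fintype.card_fin,
      (even_two_mul h).neg_one_pow, one_mul]
  conv_rhs => rw [hsplit]
  rw [hcomp, h4, e2, e3, e1]
end

section
/- Let g ≥ 1 and let t_1, …, t_g be complex numbers of absolute value 1. Set P(T) = ∏_{j=1}^{g} (T − t_j)(T − t_j⁻¹) and suppose P(T) = P(−T). Then there exist complex numbers s_1, …, s_g of absolute value 1 such that ∏_{j=1}^{g} (T − s_j)(T − s_j⁻¹) = P(T) and s_j⁻¹ = −s_{g+1−j} for all j = 1, …, g. -/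
/-!
Write `P = ∏ F(t_j)` with `F(t) = (X - t)(X - t⁻¹)`. If some `a = t_j` has `a² ≠ -1`, then `-a`
is a root of the even polynomial `P` but not of `F(a)`, so another factor `F(u)` vanishes at `-a`,
which forces `F(u) = F(-a) = F(-a⁻¹)`. The quartic `F(a) F(-a)` is even, so cancelling it leaves an
even product of `g - 2` factors; arrange those by induction and put `a` first and `-a⁻¹` last.
If instead every `t_j² = -1`, all factors equal `X² + 1` and a constant sequence works.
-/

open Polynomial Finset

section

variable {K : Type*} [Field K]

noncomputable def invPairPoly (t : K) : K[X] := (X - C t) * (X - C t⁻¹)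

lemma invPairPoly_monic (t : K) : (invPairPoly t).Monic :=
  (monic_X_sub_C t).mul (monic_X_sub_C t⁻¹)

lemma invPairPoly_inv (t : K) : invPairPoly t⁻¹ = invPairPoly t := by
  rw [invPairPoly, invPairPoly, inv_inv, mul_comm]

lemma invPairPoly_comp_neg_X (t : K) : (invPairPoly t).comp (-X) = invPairPoly (-t) := by
  simp only [invPairPoly, mul_comp, sub_comp, X_comp, C_comp, inv_neg, map_neg]
  ring

lemma isRoot_invPairPoly {t x : K} : (invPairPoly t).IsRoot x ↔ x = t ∨ x = t⁻¹ := by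
  simp [invPairPoly, sub_eq_zero]

lemma invPairPoly_eq_of_isRoot {t x : K} (h : (invPairPoly t).IsRoot x) :
    invPairPoly t = invPairPoly x := by
  rcases isRoot_invPairPoly.mp h with rfl | rfl
  · rfl
  · exact (invPairPoly_inv t).symm

lemma invPairPoly_eq_X_sq_add_one {t : K} (ht : t ^ 2 = -1) : invPairPoly t = X ^ 2 + 1 := by
  have hinv : t⁻¹ = -t := inv_eq_of_mul_eq_one_right (by linear_combination -ht)
  have hC : C t ^ 2 = -1 := by rw [← map_pow, ht, map_neg, map_one]
  rw [invPairPoly, hinv, map_neg]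
  linear_combination -hC

lemma not_isRoot_invPairPoly_neg [NeZero (2 : K)] {t : K} (ht0 : t ≠ 0) (ht : t ^ 2 ≠ -1) :
    ¬(invPairPoly t).IsRoot (-t) := by
  rw [isRoot_invPairPoly, not_or]
  refine ⟨fun h => ht0 ?_, fun h => ht ?_⟩
  · exact (mul_eq_zero.mp (by linear_combination -h : (2 : K) * t = 0)).resolve_left two_ne_zero
  · linear_combination (-t) * h - mul_inv_cancel₀ ht0

lemma exists_eq_cons_cons_of_comp_neg_X_eq [NeZero (2 : K)] {M : Multiset K} {a : K}
    (ha : a ∈ M) (ha0 : a ≠ 0) (ha2 : a ^ 2 ≠ -1)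
    (heven : (M.map invPairPoly).prod.comp (-X) = (M.map invPairPoly).prod) :
    ∃ u M', M = a ::ₘ u ::ₘ M' ∧ invPairPoly u = invPairPoly (-a) := by
  classical
  have hroot : (M.map invPairPoly).prod.IsRoot (-a) := by
    rw [IsRoot, ← heven, eval_comp, eval_neg, eval_X, neg_neg, eval_multiset_prod,
      Multiset.prod_eq_zero_iff, Multiset.map_map]
    exact Multiset.mem_map.mpr ⟨a, ha, isRoot_invPairPoly.mpr (.inl rfl)⟩
  rw [← Multiset.cons_erase ha, Multiset.map_cons, Multiset.prod_cons, root_mul,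
    or_iff_right (not_isRoot_invPairPoly_neg ha0 ha2), IsRoot, eval_multiset_prod,
    Multiset.prod_eq_zero_iff, Multiset.map_map] at hroot
  obtain ⟨u, hu, hroot⟩ := Multiset.mem_map.mp hroot
  exact ⟨u, (M.erase a).erase u, by rw [Multiset.cons_erase hu, Multiset.cons_erase ha],
    invPairPoly_eq_of_isRoot hroot⟩

lemma comp_neg_X_eq_of_eq_invPairPoly_mul {p q : K[X]} (a : K)
    (hp : p = invPairPoly a * invPairPoly (-a) * q) (heven : p.comp (-X) = p) :
    q.comp (-X) = q := by
  rw [hp, mul_comp, mul_comp, invPairPoly_comp_neg_X, invPairPoly_comp_neg_X, neg_neg,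
    mul_comm (invPairPoly (-a))] at heven
  exact mul_left_cancel₀ ((invPairPoly_monic a).mul (invPairPoly_monic (-a))).ne_zero heven

theorem exists_list_reverse_eq_map_of_comp_neg_X_eq [NeZero (2 : K)] (M : Multiset K)
    (hM : ∀ x ∈ M, x ≠ 0)
    (heven : (M.map invPairPoly).prod.comp (-X) = (M.map invPairPoly).prod) :
    ∃ L : List K, L.length = Multiset.card M ∧ (∀ x ∈ L, x ∈ M ∨ -x⁻¹ ∈ M) ∧
      (L.map invPairPoly).prod = (M.map invPairPoly).prod ∧
      L.reverse = L.map (fun x => -x⁻¹) := by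
  induction M using Multiset.strongInductionOn with
  | ih M ih =>
    by_cases hall : ∀ x ∈ M, x ^ 2 = -1
    · obtain rfl | ⟨b, hb⟩ := M.empty_or_exists_mem
      · exact ⟨[], by simp⟩
      have hb' : -b⁻¹ = b := by
        rw [inv_eq_of_mul_eq_one_right (by linear_combination -hall b hb : b * -b = 1), neg_neg]
      refine ⟨List.replicate (Multiset.card M) b, by simp, fun x hx => .inl ?_, ?_, ?_⟩
      · rwa [List.eq_of_mem_replicate hx]
      · have hF : ∀ x ∈ M, invPairPoly x = invPairPoly b := fun x hx => by
          rw [invPairPoly_eq_X_sq_add_one (hall x hx), invPairPoly_eq_X_sq_add_one (hall b hb)]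
        rw [Multiset.map_congr rfl hF, Multiset.map_const', Multiset.prod_replicate,
          List.map_replicate, List.prod_replicate]
      · rw [List.reverse_replicate, List.map_replicate, hb']
    push Not at hall
    obtain ⟨a, ha, ha2⟩ := hall
    obtain ⟨u, M', rfl, hu⟩ := exists_eq_cons_cons_of_comp_neg_X_eq ha (hM a ha) ha2 heven
    have hprod : ((a ::ₘ u ::ₘ M').map invPairPoly).prod =
        invPairPoly a * invPairPoly (-a) * (M'.map invPairPoly).prod := by
      simp [hu, mul_assoc]
    obtain ⟨L', hlen, hmem, hprod', hrev⟩ := ih M'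
      ((Multiset.lt_cons_self _ _).trans (Multiset.lt_cons_self _ _))
      (fun x hx => hM x (by simp [hx])) (comp_neg_X_eq_of_eq_invPairPoly_mul a hprod heven)
    refine ⟨a :: (L' ++ [-a⁻¹]), by simp [hlen], ?_, ?_, ?_⟩
    · simp only [List.mem_cons, List.mem_append, List.not_mem_nil, or_false]
      rintro x (rfl | hx | rfl)
      · simp
      · rcases hmem x hx with h | h <;> simp [h]
      · simp
    · rw [hprod, ← hprod', ← invPairPoly_inv (-a), ← inv_neg]
      simp [mul_comm, mul_left_comm]
    · simp [hrev]

end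

lemma prod_Icc_getD_eq_prod_map {α M : Type*} [CommMonoid M] (f : α → M) (L : List α) (d : α) :
    ∏ j ∈ Icc 1 L.length, f (L.getD (j - 1) d) = (L.map f).prod := by
  rw [← Ico_add_one_right_eq_Icc, prod_Ico_eq_prod_range, Nat.add_sub_cancel, prod_range,
    ← Fin.prod_univ_fun_getElem]
  refine Finset.prod_congr rfl fun i _ => ?_
  rw [Nat.add_sub_cancel_left, List.getD_eq_getElem _ _ i.isLt]

lemma inv_getD_eq_neg_getD_of_reverse_eq_map {K : Type*} [InvolutiveNeg K] [Inv K]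
    {L : List K} (hrev : L.reverse = L.map (fun x => -x⁻¹)) (d : K) {j : ℕ}
    (hj : j ∈ Icc 1 L.length) :
    (L.getD (j - 1) d)⁻¹ = -L.getD (L.length + 1 - j - 1) d := by
  obtain ⟨hj1, hjL⟩ := mem_Icc.mp hj
  have hpair := List.getElem_of_eq hrev (i := j - 1) (by rw [List.length_reverse]; omega)
  rw [List.getElem_reverse, List.getElem_map] at hpair
  have hidx : L.length + 1 - j - 1 = L.length - 1 - (j - 1) := by omega
  rw [List.getD_eq_getElem _ _ (by omega), hidx, List.getD_eq_getElem _ _ (by omega), hpair,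
    neg_neg]

theorem stmt_11_general (g : ℕ) (t : ℕ → ℂ)
    (ht : ∀ j ∈ Finset.Icc 1 g, ‖t j‖ = 1)
    (heven : (∏ j ∈ Finset.Icc 1 g, ((X - C (t j)) * (X - C (t j)⁻¹))).comp (-X) =
      ∏ j ∈ Finset.Icc 1 g, ((X - C (t j)) * (X - C (t j)⁻¹))) :
    ∃ s : ℕ → ℂ, (∀ j ∈ Finset.Icc 1 g, ‖s j‖ = 1) ∧
      (∏ j ∈ Finset.Icc 1 g, ((X - C (s j)) * (X - C (s j)⁻¹))) =
        (∏ j ∈ Finset.Icc 1 g, ((X - C (t j)) * (X - C (t j)⁻¹))) ∧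
      (∀ j ∈ Finset.Icc 1 g, (s j)⁻¹ = -s (g + 1 - j)) := by
  set M : Multiset ℂ := (Icc 1 g).val.map t
  have hP : ∏ j ∈ Icc 1 g, invPairPoly (t j) = (M.map invPairPoly).prod := by
    rw [Multiset.map_map]; rfl
  have hM : ∀ x ∈ M, x ≠ 0 := by
    intro x hx
    obtain ⟨j, hj, rfl⟩ := Multiset.mem_map.mp hx
    exact norm_ne_zero_iff.mp ((ht j hj).trans_ne one_ne_zero)
  obtain ⟨L, hlen, hmem, hprod, hrev⟩ :=
    exists_list_reverse_eq_map_of_comp_neg_X_eq M hM (hP ▸ heven)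
  replace hlen : L.length = g := by simpa [M] using hlen
  subst hlen
  refine ⟨fun j => L.getD (j - 1) 0, fun j hj => ?_, ?_,
    fun j hj => inv_getD_eq_neg_getD_of_reverse_eq_map hrev 0 hj⟩
  · have hj : j - 1 < L.length := by rw [mem_Icc] at hj; omega
    dsimp only
    rw [List.getD_eq_getElem _ _ hj]
    rcases hmem _ (List.getElem_mem hj) with h | h <;>
    · obtain ⟨i, hi, hti⟩ := Multiset.mem_map.mp h
      simpa [hti] using ht i hi
  · change ∏ j ∈ Icc 1 _, invPairPoly _ = ∏ j ∈ Icc 1 _, invPairPoly _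
    rw [hP, ← hprod, prod_Icc_getD_eq_prod_map]

/-- Let `g ≥ 1` and let `t_1, …, t_g` be complex numbers of absolute value 1 such that
`P(T) = ∏_{j=1}^{g} (T - t_j)(T - t_j⁻¹)` satisfies `P(T) = P(-T)`. Then there are complex
numbers `s_1, …, s_g` of absolute value 1 with `∏_{j=1}^{g} (T - s_j)(T - s_j⁻¹) = P(T)` and
`s_j⁻¹ = -s_{g+1-j}` for all `j = 1, …, g`. -/
theorem stmt_11 (g : ℕ) (hg : 1 ≤ g) (t : ℕ → ℂ)
    (ht : ∀ j ∈ Finset.Icc 1 g, ‖t j‖ = 1)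
    (heven : (∏ j ∈ Finset.Icc 1 g, ((X - C (t j)) * (X - C (t j)⁻¹))).comp (-X) =
      ∏ j ∈ Finset.Icc 1 g, ((X - C (t j)) * (X - C (t j)⁻¹))) :
    ∃ s : ℕ → ℂ, (∀ j ∈ Finset.Icc 1 g, ‖s j‖ = 1) ∧
      (∏ j ∈ Finset.Icc 1 g, ((X - C (s j)) * (X - C (s j)⁻¹))) =
        (∏ j ∈ Finset.Icc 1 g, ((X - C (t j)) * (X - C (t j)⁻¹))) ∧
      (∀ j ∈ Finset.Icc 1 g, (s j)⁻¹ = -s (g + 1 - j)) :=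
  stmt_11_general g t ht heven
end
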